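/- Let n ≥ 2, let D ⊂ ℝ^n be a compact set, and let U ⊆ ℝ^n be an admissible set of detector positions for D, i.e. every affine hyperplane H ⊂ ℝ^n with H ∩ D ≠ ∅ satisfies H ∩ U ≠ ∅. If f and g are Schwartz functions on ℝ^n supported in D such that Cf(u,β,ψ) = Cg(u,β,ψ) for all u ∈ U, all β ∈ S^{n−1}, and all ψ ∈ (0,π), then f = g. -/

import Mathlib

/-!
At opening angle `ψ = π / 2` the cone with vertex `u` and axis `β` is the hyperplane through `u`
orthogonal to `β`. By admissibility, `f` and `g` therefore have equal integrals over every
hyperplane meeting `D`, and both integrate to zero over the others. Splitting space as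
`ℝ ω ⊕ ωᗮ`, the Fourier transform at `r • ω` is the one-dimensional Fourier transform in `s` of the
integrals over the parallel hyperplanes `⟪x, ω⟫ = s` (Fourier slice theorem), so `f` and `g` have the
same Fourier transform and coincide by Fourier inversion on Schwartz space.
-/

open MeasureTheory Real
open scoped RealInnerProductSpace

noncomputable section

/-- The cone (Compton) transform of `f : ℝⁿ → ℝ`. -/
def coneTransform (n : ℕ) (f : EuclideanSpace ℝ (Fin n) → ℝ)
    (u β : EuclideanSpace ℝ (Fin n)) (ψ : ℝ) : ℝ :=
  ∫ x in {x : EuclideanSpace ℝ (Fin n) | ⟪x - u, β⟫ = ‖x - u‖ * Real.cos ψ},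
    f x ∂(μH[(n : ℝ) - 1])

open Module Submodule
open scoped FourierTransform

theorem coneTransform_pi_div_two (n : ℕ) (f : EuclideanSpace ℝ (Fin n) → ℝ)
    (u β : EuclideanSpace ℝ (Fin n)) :
    coneTransform n f u β (π / 2) = ∫ x in {x | ⟪x, β⟫ = ⟪u, β⟫}, f x ∂μH[(n : ℝ) - 1] := by
  simp only [coneTransform, cos_pi_div_two, mul_zero, inner_sub_left, sub_eq_zero]

theorem exists_smul_unit_eq {E : Type*} [NormedAddCommGroup E] [NormedSpace ℝ E] [Nontrivial E]
    (ξ : E) : ∃ r : ℝ, ∃ ω : E, ‖ω‖ = 1 ∧ r • ω = ξ := by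
  rcases eq_or_ne ξ 0 with rfl | hξ
  · obtain ⟨ω, hω⟩ := exists_norm_eq E zero_le_one
    exact ⟨0, ω, hω, zero_smul ℝ ω⟩
  · exact ⟨‖ξ‖, ‖ξ‖⁻¹ • ξ, norm_smul_inv_norm hξ, smul_inv_smul₀ (norm_ne_zero_iff.2 hξ) ξ⟩

section Hyperplane

variable {E : Type*} [NormedAddCommGroup E] [InnerProductSpace ℝ E]

theorem isometry_smul_add_orthogonal (ω : E) (s : ℝ) :
    Isometry fun z : (ℝ ∙ ω)ᗮ => s • ω + (z : E) :=
  (IsometryEquiv.addLeft (s • ω)).isometry.comp isometry_subtype_coe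

theorem inner_smul_add_orthogonal {ω : E} (hω : ‖ω‖ = 1) (s : ℝ) (z : (ℝ ∙ ω)ᗮ) :
    ⟪s • ω + (z : E), ω⟫ = s := by
  have hz : ⟪(z : E), ω⟫ = 0 := mem_orthogonal_singleton_iff_inner_left.1 z.2
  simp [inner_add_left, real_inner_smul_left, hω, hz]

theorem range_smul_add_orthogonal {ω : E} (hω : ‖ω‖ = 1) (s : ℝ) :
    Set.range (fun z : (ℝ ∙ ω)ᗮ => s • ω + (z : E)) = {x | ⟪x, ω⟫ = s} := by
  ext x
  constructor
  · rintro ⟨z, rfl⟩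
    exact inner_smul_add_orthogonal hω s z
  · intro hx
    refine ⟨⟨x - s • ω, mem_orthogonal_singleton_iff_inner_left.2 ?_⟩, by simp⟩
    simp [inner_sub_left, real_inner_smul_left, hω, show ⟪x, ω⟫ = s from hx]

variable [MeasurableSpace E] [BorelSpace E] {G : Type*} [NormedAddCommGroup G]

theorem setIntegral_hyperplane_eq_integral_orthogonal [CompleteSpace E] [NormedSpace ℝ G]
    {ω : E} (hω : ‖ω‖ = 1) (s : ℝ) {d : ℝ} (hd : 0 ≤ d) (F : E → G) :
    ∫ x in {x | ⟪x, ω⟫ = s}, F x ∂μH[d] = ∫ z : (ℝ ∙ ω)ᗮ, F (s • ω + z) ∂μH[d] := by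
  have hiso := isometry_smul_add_orthogonal ω s
  rw [← range_smul_add_orthogonal hω s, ← hiso.map_hausdorffMeasure (Or.inl hd),
    hiso.isClosedEmbedding.measurableEmbedding.integral_map]

variable [FiniteDimensional ℝ E]

def sliceIsometry {ω : E} (hω : ‖ω‖ = 1) : WithLp 2 (ℝ × (ℝ ∙ ω)ᗮ) ≃ₗᵢ[ℝ] E :=
  (LinearIsometryEquiv.withLpProdCongr 2 (LinearIsometryEquiv.toSpanUnitSingleton ω hω)
    (LinearIsometryEquiv.refl ℝ _)).trans (ℝ ∙ ω).orthogonalDecomposition.symm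

def sliceEquiv {ω : E} (hω : ‖ω‖ = 1) : ℝ × (ℝ ∙ ω)ᗮ ≃ᵐ E :=
  (MeasurableEquiv.toLp 2 _).trans (sliceIsometry hω).toMeasurableEquiv

theorem sliceEquiv_apply {ω : E} (hω : ‖ω‖ = 1) (p : ℝ × (ℝ ∙ ω)ᗮ) :
    sliceEquiv hω p = p.1 • ω + p.2 := by
  simp [sliceEquiv, sliceIsometry]

theorem measurePreserving_sliceEquiv {ω : E} (hω : ‖ω‖ = 1) :
    MeasurePreserving (sliceEquiv hω) (volume.prod volume) volume :=
  (sliceIsometry hω).measurePreserving.comp (WithLp.volume_preserving_toLp ℝ _)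

theorem fourier_smul_eq_integral_integral_orthogonal [NormedSpace ℂ G] {F : E → G}
    (hF : Integrable F) {ω : E} (hω : ‖ω‖ = 1) (r : ℝ) :
    𝓕 F (r • ω) = ∫ s : ℝ, 𝐞 (-(r * s)) • ∫ z : (ℝ ∙ ω)ᗮ, F (s • ω + z) := by
  have hmp := measurePreserving_sliceEquiv hω
  have hint : Integrable (fun v => 𝐞 (-⟪v, r • ω⟫) • F v) :=
    (fourierIntegral_convergent_iff _).2 hF
  have hint' : Integrable (fun p => 𝐞 (-⟪sliceEquiv hω p, r • ω⟫) • F (sliceEquiv hω p))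
      (volume.prod volume) :=
    (hmp.integrable_comp_emb (sliceEquiv hω).measurableEmbedding).2 hint
  rw [fourier_eq, ← hmp.integral_comp', integral_prod _ hint']
  congr 1 with s
  have hphase (z : (ℝ ∙ ω)ᗮ) : ⟪s • ω + (z : E), r • ω⟫ = r * s := by
    rw [real_inner_smul_right, inner_smul_add_orthogonal hω]
  simp only [sliceEquiv_apply, hphase, Circle.smul_def, integral_smul]

theorem integral_orthogonal_eq_of_setIntegral_hyperplane_eq [NormedSpace ℝ G] {F F' : E → G}
    {ω : E} (hω : ‖ω‖ = 1) {s : ℝ}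
    (h : ∫ x in {x | ⟪x, ω⟫ = s}, F x ∂μH[(finrank ℝ E : ℝ) - 1] =
      ∫ x in {x | ⟪x, ω⟫ = s}, F' x ∂μH[(finrank ℝ E : ℝ) - 1]) :
    ∫ z : (ℝ ∙ ω)ᗮ, F (s • ω + z) = ∫ z : (ℝ ∙ ω)ᗮ, F' (s • ω + z) := by
  have hdim : (finrank ℝ E : ℝ) - 1 = finrank ℝ (ℝ ∙ ω)ᗮ := by
    have hsum := (ℝ ∙ ω).finrank_add_finrank_orthogonal
    rw [finrank_span_singleton (norm_ne_zero_iff.1 (hω.trans_ne one_ne_zero))] at hsum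
    rw [← hsum]
    push_cast
    ring
  rw [hdim, setIntegral_hyperplane_eq_integral_orthogonal hω s (Nat.cast_nonneg _),
    setIntegral_hyperplane_eq_integral_orthogonal hω s (Nat.cast_nonneg _)] at h
  rw [← InnerProductSpace.euclideanHausdorffMeasure_eq_volume,
    Measure.euclideanHausdorffMeasure_def, integral_smul_nnreal_measure,
    integral_smul_nnreal_measure, h]

theorem fourier_eq_of_setIntegral_hyperplane_eq [Nontrivial E] [NormedSpace ℂ G] {F F' : E → G}
    (hF : Integrable F) (hF' : Integrable F')
    (h : ∀ ω : E, ‖ω‖ = 1 → ∀ s : ℝ,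
      ∫ x in {x | ⟪x, ω⟫ = s}, F x ∂μH[(finrank ℝ E : ℝ) - 1] =
        ∫ x in {x | ⟪x, ω⟫ = s}, F' x ∂μH[(finrank ℝ E : ℝ) - 1]) :
    𝓕 F = 𝓕 F' := by
  funext ξ
  obtain ⟨r, ω, hω, rfl⟩ := exists_smul_unit_eq ξ
  rw [fourier_smul_eq_integral_integral_orthogonal hF hω,
    fourier_smul_eq_integral_integral_orthogonal hF' hω]
  congr 1 with s
  rw [integral_orthogonal_eq_of_setIntegral_hyperplane_eq hω (h ω hω s)]

theorem SchwartzMap.eq_of_setIntegral_hyperplane_eq [Nontrivial E] [NormedSpace ℂ G]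
    [CompleteSpace G] {f g : SchwartzMap E G}
    (h : ∀ ω : E, ‖ω‖ = 1 → ∀ s : ℝ,
      ∫ x in {x | ⟪x, ω⟫ = s}, f x ∂μH[(finrank ℝ E : ℝ) - 1] =
        ∫ x in {x | ⟪x, ω⟫ = s}, g x ∂μH[(finrank ℝ E : ℝ) - 1]) :
    f = g := by
  have hfg : 𝓕 f = 𝓕 g := DFunLike.coe_injective <| by
    rw [SchwartzMap.fourier_coe, SchwartzMap.fourier_coe]
    exact fourier_eq_of_setIntegral_hyperplane_eq f.integrable g.integrable h
  exact (FourierTransform.fourierCLE ℂ (SchwartzMap E G)).injective hfg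

end Hyperplane

theorem cone_transform_injective_of_admissible_general (n : ℕ) (hn : 2 ≤ n)
    (D : Set (EuclideanSpace ℝ (Fin n)))
    (U : Set (EuclideanSpace ℝ (Fin n)))
    (hU : ∀ (ω : EuclideanSpace ℝ (Fin n)) (s : ℝ), ‖ω‖ = 1 →
      ({x : EuclideanSpace ℝ (Fin n) | ⟪x, ω⟫ = s} ∩ D).Nonempty →
      ({x : EuclideanSpace ℝ (Fin n) | ⟪x, ω⟫ = s} ∩ U).Nonempty)
    (f g : SchwartzMap (EuclideanSpace ℝ (Fin n)) ℝ)
    (hf : Function.support (⇑f) ⊆ D) (hg : Function.support (⇑g) ⊆ D)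
    (h : ∀ u ∈ U, ∀ β : EuclideanSpace ℝ (Fin n), ‖β‖ = 1 → ∀ ψ ∈ Set.Ioo 0 π,
      coneTransform n (⇑f) u β ψ = coneTransform n (⇑g) u β ψ) :
    f = g := by
  have : NeZero n := ⟨by omega⟩
  have hplane : ∀ ω : EuclideanSpace ℝ (Fin n), ‖ω‖ = 1 → ∀ s : ℝ,
      ∫ x in {x | ⟪x, ω⟫ = s}, f x ∂μH[(n : ℝ) - 1] =
        ∫ x in {x | ⟪x, ω⟫ = s}, g x ∂μH[(n : ℝ) - 1] := by
    intro ω hω s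
    by_cases hD : ({x | ⟪x, ω⟫ = s} ∩ D).Nonempty
    · obtain ⟨u, rfl : ⟪u, ω⟫ = s, hu⟩ := hU ω s hω hD
      simpa only [coneTransform_pi_div_two] using
        h u hu ω hω (π / 2) ⟨by positivity, by linarith [pi_pos]⟩
    · have hvanish : ∀ φ : EuclideanSpace ℝ (Fin n) → ℝ, Function.support φ ⊆ D →
          ∫ x in {x | ⟪x, ω⟫ = s}, φ x ∂μH[(n : ℝ) - 1] = 0 := fun φ hφ =>
        setIntegral_eq_zero_of_forall_eq_zero fun x hx =>
          Function.notMem_support.1 fun hφx => hD ⟨x, hx, hφ hφx⟩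
      rw [hvanish f hf, hvanish g hg]
  have hℂ : f.postcompCLM Complex.ofRealCLM = g.postcompCLM Complex.ofRealCLM := by
    refine SchwartzMap.eq_of_setIntegral_hyperplane_eq fun ω hω s => ?_
    simp only [SchwartzMap.postcompCLM_apply, Complex.ofRealCLM_apply, integral_complex_ofReal,
      finrank_euclideanSpace_fin, hplane ω hω s]
  ext x
  simpa using congr($hℂ x)

/-- If the detector set `U` is admissible for the compact set `D` (every affine hyperplane
meeting `D` meets `U`), then the cone transform restricted to vertices in `U` determines
Schwartz functions supported in `D` uniquely. -/
theorem cone_transform_injective_of_admissible (n : ℕ) (hn : 2 ≤ n)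
    (D : Set (EuclideanSpace ℝ (Fin n))) (hD : IsCompact D)
    (U : Set (EuclideanSpace ℝ (Fin n)))
    (hU : ∀ (ω : EuclideanSpace ℝ (Fin n)) (s : ℝ), ‖ω‖ = 1 →
      ({x : EuclideanSpace ℝ (Fin n) | ⟪x, ω⟫ = s} ∩ D).Nonempty →
      ({x : EuclideanSpace ℝ (Fin n) | ⟪x, ω⟫ = s} ∩ U).Nonempty)
    (f g : SchwartzMap (EuclideanSpace ℝ (Fin n)) ℝ)
    (hf : Function.support (⇑f) ⊆ D) (hg : Function.support (⇑g) ⊆ D)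
    (h : ∀ u ∈ U, ∀ β : EuclideanSpace ℝ (Fin n), ‖β‖ = 1 → ∀ ψ ∈ Set.Ioo 0 π,
      coneTransform n (⇑f) u β ψ = coneTransform n (⇑g) u β ψ) :
    f = g :=
  cone_transform_injective_of_admissible_general n hn D U hU f g hf hg h
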